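/- arXiv:1806.09717 — 2 statements merged into one kernel-verified Lean document; each statement's English description precedes it below -/
import Mathlib

section
/- For every integer n ≥ 4, the number p_{4×n} of multiple self-avoiding polygons in the 4×n grid satisfies 8·(49/8)^(n−2) − 1 ≤ p_{4×n} ≤ (9520/27)·(155/22)^(n−4) − 1. -/
/-- Adjacency in the `m × n` grid graph: two lattice points at Euclidean distance 1. -/
def gridAdj (m n : ℕ) (a b : Fin m × Fin n) : Prop :=
  (a.1 = b.1 ∧ ((a.2 : ℕ) + 1 = (b.2 : ℕ) ∨ (b.2 : ℕ) + 1 = (a.2 : ℕ))) ∨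
  (a.2 = b.2 ∧ ((a.1 : ℕ) + 1 = (b.1 : ℕ) ∨ (b.1 : ℕ) + 1 = (a.1 : ℕ)))

instance (m n : ℕ) (a b : Fin m × Fin n) : Decidable (gridAdj m n a b) := by
  unfold gridAdj; infer_instance

/-- The `m × n` grid graph on vertex set `{1,…,m} × {1,…,n}`. -/
def gridGraph (m n : ℕ) : SimpleGraph (Fin m × Fin n) where
  Adj := gridAdj m n
  symm := ⟨by intro a b h; unfold gridAdj at *; tauto⟩
  loopless := ⟨by
    intro a h
    rcases h with ⟨_, h⟩ | ⟨_, h⟩ <;> omega⟩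

instance (m n : ℕ) : DecidableRel (gridGraph m n).Adj :=
  fun a b => inferInstanceAs (Decidable (gridAdj m n a b))

/-- The set of multiple self-avoiding polygons in the `m × n` grid:
nonempty edge subsets of the grid graph in which every vertex has degree 0 or 2. -/
def msapFinset (m n : ℕ) : Finset (Finset (Sym2 (Fin m × Fin n))) :=
  ((gridGraph m n).edgeFinset.powerset).filter
    (fun S => S ≠ ∅ ∧ ∀ v : Fin m × Fin n,
      (S.filter (fun e => v ∈ e)).card = 0 ∨ (S.filter (fun e => v ∈ e)).card = 2)

/-- `p_{m×n}`, the number of multiple self-avoiding polygons in the `m × n` grid. -/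
def msapCount (m n : ℕ) : ℕ := (msapFinset m n).card

/-!
Transfer matrices. A set of grid edges in which every vertex has degree 0 or 2 is cut, between
consecutive columns, into states `s₀, …, sₙ : Fin m → Bool` recording which rows carry a
horizontal edge across the cut (`s₀ = sₙ = ⊥`), plus, for each column, vertical edges making all
degrees in that column 0 or 2. The number of such columns between the states `a` and `b` is the
entry `T a b` of the transfer matrix, so `p_{m×n} + 1 = (T ^ n) ⊥ ⊥`, the `1` counting the
empty edge set.

For `m = 4` a finite computation gives `49 (T²) b ⊥ ≤ 8 (T³) b ⊥` and
`22 (T⁵) b ⊥ ≤ 155 (T⁴) b ⊥` for every state `b`. Multiplying on the left by the nonnegative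
matrix `T ^ k` turns these into `49 tₖ₊₂ ≤ 8 tₖ₊₃` and `22 tₖ₊₅ ≤ 155 tₖ₊₄` for
`tₙ = (T ^ n) ⊥ ⊥`, and the bounds follow from `t₂ = 8` and `t₄ = 322 ≤ 9520 / 27`.
-/

open Finset

theorem Matrix.pow_apply_eq_sum_prod {ι R : Type*} [Fintype ι] [DecidableEq ι] [CommSemiring R]
    (M : Matrix ι ι R) (n : ℕ) (a b : ι) :
    (M ^ n) a b = ∑ p : Fin (n + 1) → ι with p 0 = a ∧ p (Fin.last n) = b,
      ∏ j : Fin n, M (p j.castSucc) (p j.succ) := by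
  rw [sum_filter]
  induction n generalizing a with
  | zero =>
    rw [pow_zero, Matrix.one_apply, ← (Equiv.funUnique (Fin 1) ι).symm.sum_comp,
      Fintype.sum_eq_single a fun x hx => by simp [hx]]
    simp [Fin.last]
  | succ n ih =>
    rw [pow_succ', Matrix.mul_apply, ← (Fin.consEquiv fun _ => ι).sum_comp,
      Fintype.sum_prod_type]
    simp only [ih, mul_sum, Fin.prod_univ_succ, Fin.consEquiv_apply, Fin.cons_zero, Fin.cons_succ,
      ← Fin.succ_last, ← Fin.succ_castSucc, Fin.castSucc_zero, ite_and, mul_ite, mul_zero]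
    rw [sum_comm]
    simp [sum_ite_eq, sum_ite_eq']

theorem Matrix.const_mul_mul_apply_le {ι R : Type*} [Fintype ι] [CommSemiring R] [PartialOrder R]
    [IsOrderedRing R] {M A B : Matrix ι ι R} {c d : R} {j : ι} (hM : ∀ a b, 0 ≤ M a b)
    (hAB : ∀ b, c * A b j ≤ d * B b j) (i : ι) : c * (M * A) i j ≤ d * (M * B) i j := by
  simp only [Matrix.mul_apply, mul_sum]
  refine sum_le_sum fun b _ => ?_
  rw [mul_left_comm, mul_left_comm d]
  exact mul_le_mul_of_nonneg_left (hAB b) (hM i b)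

section Growth

variable {R : Type*} [CommSemiring R] [PartialOrder R] [IsOrderedRing R] {u : ℕ → R} {c d : R}

lemma pow_mul_le_pow_mul_of_mul_le_mul_succ (hc : 0 ≤ c) (hd : 0 ≤ d)
    (h : ∀ k, c * u k ≤ d * u (k + 1)) (k : ℕ) : c ^ k * u 0 ≤ d ^ k * u k := by
  induction k with
  | zero => simp
  | succ k ih =>
    calc c ^ (k + 1) * u 0 = c * (c ^ k * u 0) := by ring
      _ ≤ c * (d ^ k * u k) := mul_le_mul_of_nonneg_left ih hc
      _ = d ^ k * (c * u k) := by ring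
      _ ≤ d ^ k * (d * u (k + 1)) := mul_le_mul_of_nonneg_left (h k) (pow_nonneg hd k)
      _ = d ^ (k + 1) * u (k + 1) := by ring

lemma pow_mul_le_pow_mul_of_mul_succ_le_mul (hc : 0 ≤ c) (hd : 0 ≤ d)
    (h : ∀ k, c * u (k + 1) ≤ d * u k) (k : ℕ) : c ^ k * u k ≤ d ^ k * u 0 := by
  induction k with
  | zero => simp
  | succ k ih =>
    calc c ^ (k + 1) * u (k + 1) = c ^ k * (c * u (k + 1)) := by ring
      _ ≤ c ^ k * (d * u k) := mul_le_mul_of_nonneg_left (h k) (pow_nonneg hc k)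
      _ = d * (c ^ k * u k) := by ring
      _ ≤ d * (d ^ k * u 0) := mul_le_mul_of_nonneg_left ih hd
      _ = d ^ (k + 1) * u 0 := by ring

end Growth

namespace Fin

variable {k : ℕ}

lemma card_filter_castSucc_eq_and {i : Fin (k + 1)} {c : Bool} (h : c → i ≠ last k) :
    #{y : Fin k | y.castSucc = i ∧ c} = c.toNat := by
  cases c
  · simp
  · obtain ⟨y, rfl⟩ := exists_castSucc_eq.mpr (h rfl)
    simp [castSucc_inj, filter_eq']

lemma card_filter_succ_eq_and {i : Fin (k + 1)} {c : Bool} (h : c → i ≠ 0) :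
    #{y : Fin k | y.succ = i ∧ c} = c.toNat := by
  cases c
  · simp
  · obtain ⟨y, rfl⟩ := exists_succ_eq.mpr (h rfl)
    simp [succ_inj, filter_eq']

end Fin

namespace SimpleGraph

lemma exists_le_edgeSet_eq {V : Type*} {G : SimpleGraph V} {s : Set (Sym2 V)}
    (hs : s ⊆ G.edgeSet) : ∃ K ≤ G, K.edgeSet = s := by
  have hK : (fromEdgeSet s).edgeSet = s := (edgeSet_eq_iff _ _).mpr ⟨rfl,
    Set.disjoint_left.mpr fun _ he hd =>
      not_isDiag_of_mem_edgeSet _ (hs he) (Sym2.mem_diagSet.mp hd)⟩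
  exact ⟨fromEdgeSet s, edgeSet_subset_edgeSet.mp (by rw [hK]; exact hs), hK⟩

section FiberBoxProd

variable {α β : Type*}

/-- A box product whose factors vary from fiber to fiber: constant families give `G □ H`. -/
def fiberBoxProd (G : β → SimpleGraph α) (H : α → SimpleGraph β) : SimpleGraph (α × β) where
  Adj x y := (G x.2).Adj x.1 y.1 ∧ x.2 = y.2 ∨ (H x.1).Adj x.2 y.2 ∧ x.1 = y.1
  symm := ⟨by
    rintro ⟨a, b⟩ ⟨a', b'⟩ (⟨h, rfl⟩ | ⟨h, rfl⟩)
    exacts [Or.inl ⟨h.symm, rfl⟩, Or.inr ⟨h.symm, rfl⟩]⟩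
  loopless := ⟨by rintro ⟨a, b⟩ (⟨h, -⟩ | ⟨h, -⟩) <;> exact h.ne rfl⟩

variable {G : β → SimpleGraph α} {H : α → SimpleGraph β}

@[simp]
lemma fiberBoxProd_adj {x y : α × β} :
    (fiberBoxProd G H).Adj x y ↔
      (G x.2).Adj x.1 y.1 ∧ x.2 = y.2 ∨ (H x.1).Adj x.2 y.2 ∧ x.1 = y.1 :=
  Iff.rfl

instance [∀ b, DecidableRel (G b).Adj] [∀ a, DecidableRel (H a).Adj] [DecidableEq α]
    [DecidableEq β] : DecidableRel (fiberBoxProd G H).Adj :=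
  fun _ _ => inferInstanceAs (Decidable (_ ∨ _))

lemma comap_fiberBoxProd_left (b : β) : (fiberBoxProd G H).comap (·, b) = G b := by
  ext; simp

lemma comap_fiberBoxProd_right (a : α) : (fiberBoxProd G H).comap (a, ·) = H a := by
  ext; simp

lemma fiberBoxProd_le_boxProd {G₀ : SimpleGraph α} {H₀ : SimpleGraph β} (hG : ∀ b, G b ≤ G₀)
    (hH : ∀ a, H a ≤ H₀) : fiberBoxProd G H ≤ G₀ □ H₀ := by
  rintro x y (⟨h, e⟩ | ⟨h, e⟩)
  exacts [Or.inl ⟨hG _ h, e⟩, Or.inr ⟨hH _ h, e⟩]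

lemma eq_fiberBoxProd_of_le_boxProd {K : SimpleGraph (α × β)} {G₀ : SimpleGraph α}
    {H₀ : SimpleGraph β} (hK : K ≤ G₀ □ H₀) :
    K = fiberBoxProd (fun b => K.comap (·, b)) (fun a => K.comap (a, ·)) := by
  ext ⟨a, b⟩ ⟨a', b'⟩
  constructor
  · intro h
    rcases hK h with ⟨-, rfl⟩ | ⟨-, rfl⟩
    exacts [Or.inl ⟨h, rfl⟩, Or.inr ⟨h, rfl⟩]
  · rintro (⟨h, rfl⟩ | ⟨h, rfl⟩) <;> exact h

lemma degree_fiberBoxProd (x : α × β) [Fintype ((G x.2).neighborSet x.1)]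
    [Fintype ((H x.1).neighborSet x.2)] [Fintype ((fiberBoxProd G H).neighborSet x)] :
    (fiberBoxProd G H).degree x = (G x.2).degree x.1 + (H x.1).degree x.2 := by
  have hdisj : Disjoint ((G x.2).neighborFinset x.1 ×ˢ {x.2})
      ({x.1} ×ˢ (H x.1).neighborFinset x.2) :=
    disjoint_product.mpr <| Or.inl <| neighborFinset_disjoint_singleton _ _
  have hnbr : (fiberBoxProd G H).neighborFinset x =
      ((G x.2).neighborFinset x.1 ×ˢ {x.2}).disjUnion ({x.1} ×ˢ (H x.1).neighborFinset x.2)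
        hdisj := by
    ext y
    simp only [mem_disjUnion, mem_product, mem_singleton, mem_neighborFinset, fiberBoxProd_adj]
    simp only [eq_comm, and_comm]
  rw [degree, degree, degree, hnbr, card_disjUnion]
  simp_rw [card_product, card_singleton, mul_one, one_mul]

end FiberBoxProd

section PathSubgraph

variable {k : ℕ}

/-- `b i` switches on the edge `{i - 1, i}`; the slots `b 0` and `b k` lie beyond the two ends,
so that every vertex `x` sees exactly the slots `x.castSucc` and `x.succ`. -/
def pathSubgraph (b : Fin (k + 1) → Bool) : SimpleGraph (Fin k) where
  Adj x y := x.succ = y.castSucc ∧ b x.succ ∨ y.succ = x.castSucc ∧ b y.succ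
  symm := ⟨fun _ _ => Or.symm⟩
  loopless := ⟨fun x h => by rcases h with ⟨h, -⟩ | ⟨h, -⟩ <;> exact x.castSucc_lt_succ.ne' h⟩

instance (b : Fin (k + 1) → Bool) : DecidableRel (pathSubgraph b).Adj :=
  fun _ _ => inferInstanceAs (Decidable (_ ∨ _))

lemma pathSubgraph_le_pathGraph (b : Fin (k + 1) → Bool) : pathSubgraph b ≤ pathGraph k := by
  rintro x y (⟨h, -⟩ | ⟨h, -⟩) <;> rw [pathGraph_adj] <;>
    simp only [Fin.ext_iff, Fin.val_succ, Fin.val_castSucc] at h <;> omega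

lemma pathSubgraph_adj_of_succ_eq {b : Fin (k + 1) → Bool} {x y : Fin k}
    (h : x.succ = y.castSucc) : (pathSubgraph b).Adj x y ↔ b x.succ := by
  refine ⟨?_, fun hb => Or.inl ⟨h, hb⟩⟩
  rintro (⟨-, hb⟩ | ⟨h', -⟩)
  · exact hb
  · simp only [Fin.ext_iff, Fin.val_succ, Fin.val_castSucc] at h h'
    omega

lemma degree_pathSubgraph {b : Fin (k + 1) → Bool} (h0 : b 0 = false)
    (hk : b (Fin.last k) = false) (x : Fin k) :
    (pathSubgraph b).degree x = (b x.castSucc).toNat + (b x.succ).toNat := by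
  have hnbr : (pathSubgraph b).neighborFinset x =
      univ.filter (fun y : Fin k => y.succ = x.castSucc ∧ b x.castSucc) ∪
        univ.filter (fun y : Fin k => y.castSucc = x.succ ∧ b x.succ) := by
    ext y
    simp only [mem_neighborFinset, mem_union, mem_filter, mem_univ, true_and]
    constructor
    · rintro (⟨h, hb⟩ | ⟨h, hb⟩)
      exacts [Or.inr ⟨h.symm, hb⟩, Or.inl ⟨h, h ▸ hb⟩]
    · rintro (⟨h, hb⟩ | ⟨h, hb⟩)
      exacts [Or.inr ⟨h, h ▸ hb⟩, Or.inl ⟨h.symm, hb⟩]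
  have hdisj : Disjoint (univ.filter fun y : Fin k => y.succ = x.castSucc ∧ b x.castSucc)
      (univ.filter fun y : Fin k => y.castSucc = x.succ ∧ b x.succ) := by
    refine disjoint_filter.mpr fun y _ h h' => ?_
    simp only [Fin.ext_iff, Fin.val_succ, Fin.val_castSucc] at h h'
    omega
  rw [← card_neighborFinset_eq_degree, hnbr, card_union_of_disjoint hdisj,
    Fin.card_filter_succ_eq_and, Fin.card_filter_castSucc_eq_and]
  exacts [fun hb he => by simp [he, hk] at hb, fun hb he => by simp [he, h0] at hb]

lemma eq_of_pathSubgraph_eq {b b' : Fin (k + 1) → Bool} (h0 : b 0 = false)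
    (hk : b (Fin.last k) = false) (h0' : b' 0 = false) (hk' : b' (Fin.last k) = false)
    (h : pathSubgraph b = pathSubgraph b') : b = b' := by
  funext i
  by_cases hi0 : i = 0
  · rw [hi0, h0, h0']
  by_cases hik : i = Fin.last k
  · rw [hik, hk, hk']
  obtain ⟨x, rfl⟩ := Fin.exists_succ_eq.mpr hi0
  obtain ⟨y, hy⟩ := Fin.exists_castSucc_eq.mpr hik
  rw [Bool.eq_iff_iff, ← pathSubgraph_adj_of_succ_eq hy.symm,
    ← pathSubgraph_adj_of_succ_eq hy.symm, h]

lemma exists_pathSubgraph_eq {K : SimpleGraph (Fin k)} (hK : K ≤ pathGraph k) :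
    ∃ b : Fin (k + 1) → Bool, b 0 = false ∧ b (Fin.last k) = false ∧ pathSubgraph b = K := by
  classical
  refine ⟨fun i => decide (∃ x y : Fin k, x.succ = i ∧ y.castSucc = i ∧ K.Adj x y), ?_, ?_, ?_⟩
  · simp [Fin.succ_ne_zero]
  · simp [Fin.castSucc_ne_last]
  ext x y
  constructor
  · rintro (⟨h, hb⟩ | ⟨h, hb⟩)
    · obtain ⟨x', y', hx, hy, hadj⟩ := of_decide_eq_true hb
      rwa [Fin.succ_inj.mp hx, Fin.castSucc_inj.mp (hy.trans h)] at hadj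
    · obtain ⟨y', x', hy, hx, hadj⟩ := of_decide_eq_true hb
      rw [Fin.succ_inj.mp hy, Fin.castSucc_inj.mp (hx.trans h)] at hadj
      exact hadj.symm
  · intro hxy
    rcases pathGraph_adj.mp (hK hxy) with h | h
    · have h' : x.succ = y.castSucc := Fin.ext h
      exact Or.inl ⟨h', decide_eq_true ⟨x, y, rfl, h'.symm, hxy⟩⟩
    · have h' : y.succ = x.castSucc := Fin.ext h
      exact Or.inr ⟨h', decide_eq_true ⟨y, x, rfl, h'.symm, hxy.symm⟩⟩

end PathSubgraph

end SimpleGraph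

open SimpleGraph

lemma gridGraph_eq_boxProd (m n : ℕ) : gridGraph m n = pathGraph m □ pathGraph n := by
  ext x y
  simp only [gridGraph, gridAdj, boxProd_adj, pathGraph_adj, Fin.ext_iff]
  tauto

def DegreesZeroOrTwo {V : Type*} [Fintype V] [DecidableEq V] (S : Finset (Sym2 V)) : Prop :=
  ∀ v, #{e ∈ S | v ∈ e} = 0 ∨ #{e ∈ S | v ∈ e} = 2

instance {V : Type*} [Fintype V] [DecidableEq V] : DecidablePred (DegreesZeroOrTwo (V := V)) :=
  fun _ => inferInstanceAs (Decidable (∀ _, _))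

lemma msapCount_add_one_eq_card_filter (m n : ℕ) :
    msapCount m n + 1 = #{S ∈ (gridGraph m n).edgeFinset.powerset | DegreesZeroOrTwo S} := by
  have hempty : ∅ ∈ {S ∈ (gridGraph m n).edgeFinset.powerset | DegreesZeroOrTwo S} := by
    simp [DegreesZeroOrTwo]
  have herase : msapFinset m n =
      {S ∈ (gridGraph m n).edgeFinset.powerset | DegreesZeroOrTwo S}.erase ∅ := by
    ext S
    rw [msapFinset, mem_erase, mem_filter, mem_filter]
    exact and_left_comm
  rw [msapCount, herase, card_erase_add_one hempty]

section Configurations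

variable {m n : ℕ}

/-- `h i r` is the horizontal edge of row `r` between the columns `i - 1` and `i`, `v j k` the
vertical edge of column `j` between the rows `k - 1` and `k`, with the conventions of
`pathSubgraph`. -/
def configGraph (h : Fin (n + 1) → Fin m → Bool) (v : Fin n → Fin (m + 1) → Bool) :
    SimpleGraph (Fin m × Fin n) :=
  fiberBoxProd (fun j => pathSubgraph (v j)) (fun r => pathSubgraph (h · r))

instance (h : Fin (n + 1) → Fin m → Bool) (v : Fin n → Fin (m + 1) → Bool) :
    DecidableRel (configGraph h v).Adj :=
  inferInstanceAs (DecidableRel (fiberBoxProd _ _).Adj)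

structure IsFramed (h : Fin (n + 1) → Fin m → Bool) (v : Fin n → Fin (m + 1) → Bool) : Prop where
  h_zero : h 0 = ⊥
  h_last : h (Fin.last n) = ⊥
  v_zero : ∀ j, v j 0 = false
  v_last : ∀ j, v j (Fin.last m) = false

def columnDegree (a b : Fin m → Bool) (w : Fin (m + 1) → Bool) (r : Fin m) : ℕ :=
  (w r.castSucc).toNat + (w r.succ).toNat + ((a r).toNat + (b r).toNat)

def ColumnAdmissible (a b : Fin m → Bool) (w : Fin (m + 1) → Bool) : Prop :=
  w 0 = false ∧ w (Fin.last m) = false ∧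
    ∀ r, columnDegree a b w r = 0 ∨ columnDegree a b w r = 2

instance (a b : Fin m → Bool) : DecidablePred (ColumnAdmissible a b) :=
  fun _ => inferInstanceAs (Decidable (_ ∧ _ ∧ _))

lemma configGraph_le_gridGraph (h : Fin (n + 1) → Fin m → Bool)
    (v : Fin n → Fin (m + 1) → Bool) : configGraph h v ≤ gridGraph m n :=
  gridGraph_eq_boxProd m n ▸ fiberBoxProd_le_boxProd (fun _ => pathSubgraph_le_pathGraph _)
    (fun _ => pathSubgraph_le_pathGraph _)

lemma degree_configGraph {h : Fin (n + 1) → Fin m → Bool} {v : Fin n → Fin (m + 1) → Bool}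
    (hf : IsFramed h v) (r : Fin m) (j : Fin n) :
    (configGraph h v).degree (r, j) = columnDegree (h j.castSucc) (h j.succ) (v j) r := by
  calc (configGraph h v).degree (r, j)
      = (pathSubgraph (v j)).degree r + (pathSubgraph (h · r)).degree j :=
        degree_fiberBoxProd (r, j)
    _ = _ := by
      rw [degree_pathSubgraph (hf.v_zero j) (hf.v_last j),
        degree_pathSubgraph (congrFun hf.h_zero r) (congrFun hf.h_last r)]
      rfl

lemma eq_of_configGraph_eq {h h' : Fin (n + 1) → Fin m → Bool}
    {v v' : Fin n → Fin (m + 1) → Bool} (hf : IsFramed h v) (hf' : IsFramed h' v')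
    (hG : configGraph h v = configGraph h' v') : h = h' ∧ v = v' := by
  constructor
  · ext i r
    have hrow := congrArg (fun G => G.comap (r, ·)) hG
    simp only [configGraph, comap_fiberBoxProd_right] at hrow
    exact congrFun (eq_of_pathSubgraph_eq (congrFun hf.h_zero r) (congrFun hf.h_last r)
      (congrFun hf'.h_zero r) (congrFun hf'.h_last r) hrow) i
  · ext j k
    have hcol := congrArg (fun G => G.comap (·, j)) hG
    simp only [configGraph, comap_fiberBoxProd_left] at hcol
    exact congrFun (eq_of_pathSubgraph_eq (hf.v_zero j) (hf.v_last j) (hf'.v_zero j)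
      (hf'.v_last j) hcol) k

lemma exists_configGraph_eq {K : SimpleGraph (Fin m × Fin n)} (hK : K ≤ gridGraph m n) :
    ∃ (h : Fin (n + 1) → Fin m → Bool) (v : Fin n → Fin (m + 1) → Bool),
      IsFramed h v ∧ configGraph h v = K := by
  rw [gridGraph_eq_boxProd] at hK
  have hrow (r : Fin m) : K.comap (r, ·) ≤ pathGraph n := fun _ _ hxy =>
    boxProd_adj_right.mp (hK hxy)
  have hcol (j : Fin n) : K.comap (·, j) ≤ pathGraph m := fun _ _ hxy =>
    boxProd_adj_left.mp (hK hxy)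
  choose row row_zero row_last row_eq using fun r => exists_pathSubgraph_eq (hrow r)
  choose col col_zero col_last col_eq using fun j => exists_pathSubgraph_eq (hcol j)
  refine ⟨fun i r => row r i, col, ⟨funext row_zero, funext row_last, col_zero, col_last⟩, ?_⟩
  rw [eq_fiberBoxProd_of_le_boxProd hK, configGraph]
  simp only [col_eq, row_eq]

end Configurations

def transferMatrix (m : ℕ) : Matrix (Fin m → Bool) (Fin m → Bool) ℕ :=
  Matrix.of fun a b => #{w | ColumnAdmissible a b w}

def admissibleConfigs (m n : ℕ) :
    Finset ((Fin (n + 1) → Fin m → Bool) × (Fin n → Fin (m + 1) → Bool)) :=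
  {c | c.1 0 = ⊥ ∧ c.1 (Fin.last n) = ⊥ ∧
    ∀ j, ColumnAdmissible (c.1 j.castSucc) (c.1 j.succ) (c.2 j)}

lemma mem_admissibleConfigs {m n : ℕ}
    {c : (Fin (n + 1) → Fin m → Bool) × (Fin n → Fin (m + 1) → Bool)} :
    c ∈ admissibleConfigs m n ↔
      IsFramed c.1 c.2 ∧ DegreesZeroOrTwo (configGraph c.1 c.2).edgeFinset := by
  obtain ⟨h, v⟩ := c
  have hdeg (hf : IsFramed h v) : (∀ j, ColumnAdmissible (h j.castSucc) (h j.succ) (v j)) ↔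
      DegreesZeroOrTwo (configGraph h v).edgeFinset := by
    simp only [ColumnAdmissible, DegreesZeroOrTwo, hf.v_zero, hf.v_last, true_and, Prod.forall,
      ← incidenceFinset_eq_filter, card_incidenceFinset_eq_degree, degree_configGraph hf]
    exact forall_comm
  simp only [admissibleConfigs, mem_filter, mem_univ, true_and]
  constructor
  · rintro ⟨h0, hn, hadm⟩
    have hf : IsFramed h v := ⟨h0, hn, fun j => (hadm j).1, fun j => (hadm j).2.1⟩
    exact ⟨hf, (hdeg hf).mp hadm⟩
  · rintro ⟨hf, hdegs⟩
    exact ⟨hf.h_zero, hf.h_last, (hdeg hf).mpr hdegs⟩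

lemma card_filter_degreesZeroOrTwo_eq_card_admissibleConfigs (m n : ℕ) :
    #{S ∈ (gridGraph m n).edgeFinset.powerset | DegreesZeroOrTwo S} =
      #(admissibleConfigs m n) := by
  symm
  refine card_bij (fun c _ => (configGraph c.1 c.2).edgeFinset) (fun c hc => ?_)
    (fun c hc c' hc' hE => ?_) (fun S hS => ?_)
  · refine mem_filter.mpr ⟨mem_powerset.mpr ?_, (mem_admissibleConfigs.mp hc).2⟩
    exact edgeFinset_subset_edgeFinset.mpr (configGraph_le_gridGraph _ _)
  · exact Prod.ext_iff.mpr <| eq_of_configGraph_eq (mem_admissibleConfigs.mp hc).1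
      (mem_admissibleConfigs.mp hc').1 (edgeFinset_inj.mp hE)
  · obtain ⟨hSE, hdeg⟩ := mem_filter.mp hS
    have hSE' : (S : Set (Sym2 (Fin m × Fin n))) ⊆ (gridGraph m n).edgeSet := by
      rw [← coe_edgeFinset]
      exact_mod_cast mem_powerset.mp hSE
    obtain ⟨K, hKG, hKS⟩ := exists_le_edgeSet_eq hSE'
    obtain ⟨h, v, hf, rfl⟩ := exists_configGraph_eq hKG
    have hE : (configGraph h v).edgeFinset = S := by
      rw [← coe_inj, coe_edgeFinset, hKS]
    exact ⟨(h, v), mem_admissibleConfigs.mpr ⟨hf, hE ▸ hdeg⟩, hE⟩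

lemma card_admissibleConfigs (m n : ℕ) :
    #(admissibleConfigs m n) = (transferMatrix m ^ n) ⊥ ⊥ := by
  rw [Matrix.pow_apply_eq_sum_prod, admissibleConfigs, card_filter, Fintype.sum_prod_type,
    sum_filter]
  refine sum_congr rfl fun h _ => ?_
  split_ifs with hb
  · have hpi : univ.filter (fun v : Fin n → Fin (m + 1) → Bool =>
          ∀ j, ColumnAdmissible (h j.castSucc) (h j.succ) (v j)) =
        Fintype.piFinset fun j : Fin n => {w | ColumnAdmissible (h j.castSucc) (h j.succ) w} := by
      ext
      simp
    simp only [hb, true_and, ← card_filter, hpi, Fintype.card_piFinset]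
    rfl
  · exact sum_eq_zero fun v _ => if_neg fun hc => hb ⟨hc.1, hc.2.1⟩

theorem msapCount_add_one (m n : ℕ) : msapCount m n + 1 = (transferMatrix m ^ n) ⊥ ⊥ := by
  rw [msapCount_add_one_eq_card_filter, card_filter_degreesZeroOrTwo_eq_card_admissibleConfigs,
    card_admissibleConfigs]

lemma transferMatrix_four_pow_two_apply_bot : (transferMatrix 4 ^ 2) ⊥ ⊥ = 8 := by
  decide +kernel

lemma transferMatrix_four_pow_four_apply_bot : (transferMatrix 4 ^ 4) ⊥ ⊥ = 322 := by
  decide +kernel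

lemma transferMatrix_four_pow_two_le_pow_three (b : Fin 4 → Bool) :
    49 * (transferMatrix 4 ^ 2) b ⊥ ≤ 8 * (transferMatrix 4 ^ 3) b ⊥ := by
  revert b
  decide +kernel

lemma transferMatrix_four_pow_five_le_pow_four (b : Fin 4 → Bool) :
    22 * (transferMatrix 4 ^ 5) b ⊥ ≤ 155 * (transferMatrix 4 ^ 4) b ⊥ := by
  revert b
  decide +kernel

lemma pow_mul_le_transferMatrix_four_pow (k : ℕ) :
    49 ^ k * 8 ≤ 8 ^ k * (transferMatrix 4 ^ (k + 2)) ⊥ ⊥ := by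
  rw [← transferMatrix_four_pow_two_apply_bot]
  refine pow_mul_le_pow_mul_of_mul_le_mul_succ (u := fun k => (transferMatrix 4 ^ (k + 2)) ⊥ ⊥)
    (Nat.zero_le _) (Nat.zero_le _) (fun k => ?_) k
  show 49 * (transferMatrix 4 ^ (k + 2)) ⊥ ⊥ ≤ 8 * (transferMatrix 4 ^ (k + 3)) ⊥ ⊥
  rw [pow_add _ k 2, pow_add _ k 3]
  exact Matrix.const_mul_mul_apply_le (fun _ _ => Nat.zero_le _)
    transferMatrix_four_pow_two_le_pow_three _

lemma transferMatrix_four_pow_le_pow_mul (k : ℕ) :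
    22 ^ k * (transferMatrix 4 ^ (k + 4)) ⊥ ⊥ ≤ 155 ^ k * 322 := by
  rw [← transferMatrix_four_pow_four_apply_bot]
  refine pow_mul_le_pow_mul_of_mul_succ_le_mul (u := fun k => (transferMatrix 4 ^ (k + 4)) ⊥ ⊥)
    (Nat.zero_le _) (Nat.zero_le _) (fun k => ?_) k
  show 22 * (transferMatrix 4 ^ (k + 5)) ⊥ ⊥ ≤ 155 * (transferMatrix 4 ^ (k + 4)) ⊥ ⊥
  rw [pow_add _ k 5, pow_add _ k 4]
  exact Matrix.const_mul_mul_apply_le (fun _ _ => Nat.zero_le _)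
    transferMatrix_four_pow_five_le_pow_four _

/-- Bounds on the number of multiple self-avoiding polygons in the 4×n grid. -/
theorem msap_four_by_n (n : ℕ) (hn : 4 ≤ n) :
    8 * ((49 : ℝ) / 8) ^ (n - 2) - 1 ≤ (msapCount 4 n : ℝ) ∧
    (msapCount 4 n : ℝ) ≤ (9520 : ℝ) / 27 * ((155 : ℝ) / 22) ^ (n - 4) - 1 := by
  obtain ⟨k, rfl⟩ : ∃ k, n = k + 4 := ⟨n - 4, by omega⟩
  have hcount : (msapCount 4 (k + 4) : ℝ) + 1 = ((transferMatrix 4 ^ (k + 4)) ⊥ ⊥ : ℕ) := by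
    exact_mod_cast msapCount_add_one 4 (k + 4)
  have hlower : (49 : ℝ) ^ (k + 2) * 8 ≤ 8 ^ (k + 2) * ((transferMatrix 4 ^ (k + 4)) ⊥ ⊥ : ℕ) := by
    exact_mod_cast pow_mul_le_transferMatrix_four_pow (k + 2)
  have hupper : (22 : ℝ) ^ k * ((transferMatrix 4 ^ (k + 4)) ⊥ ⊥ : ℕ) ≤ 155 ^ k * 322 := by
    exact_mod_cast transferMatrix_four_pow_le_pow_mul k
  rw [show k + 4 - 2 = k + 2 by omega, Nat.add_sub_cancel, div_pow, div_pow]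
  constructor
  · rw [sub_le_iff_le_add, hcount, mul_div_assoc', div_le_iff₀ (by positivity)]
    linarith
  · rw [le_sub_iff_add_le, hcount, mul_div_assoc', le_div_iff₀ (by positivity)]
    nlinarith [pow_pos (by norm_num : (0 : ℝ) < 155) k]
end

section
/- For every n ≥ 3, p_{n×n} ≥ (17/10)^((n−2)²), and hence liminf_{n→∞} (p_{n×n})^(1/n²) ≥ 17/10 > 1; in particular p_{n×n} grows at least exponentially in n². -/
/-!
Colour the unit squares of the `n × n` grid black and white. In the set of edges separating squares
of different colours every vertex has degree `0`, `2` or `4`, with `4` exactly at the centre of a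
`2 × 2` checkerboard, and this edge set determines the colouring. Hence `p_{n×n} + 1` is at least the number
of checkerboard-free `(n-1) × (n-1)` binary arrays. Give a row the weight `(7/10)^c`, where `c` is
its number of colour changes; the rows that may follow a row `r` of length `m` have total weight at
least `(17/10)^(m-1)` times the weight of `r`, so building the arrays row by row gives at least
`2 (17/10)^((n-2)(n-1))` of them. For the liminf, `p_{n×n} ≤ 2^(#edges) ≤ 4^(n²)`.
-/

open Finset

namespace MSAP

section Chains

variable {α : Type*} [DecidableEq α] (s : Finset α) (R : α → α → Prop) [DecidableRel R]

def chainsOf : ℕ → Finset (List α)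
  | 0 => {[]}
  | k + 1 => ((s ×ˢ chainsOf k).filter fun p => ∀ b ∈ p.2.head?, R p.1 b).image
      fun p => p.1 :: p.2

def extensions (l : List α) : Finset α := s.filter fun a => ∀ b ∈ l.head?, R a b

variable {s R}

theorem mem_chainsOf {k : ℕ} {l : List α} :
    l ∈ chainsOf s R k ↔ l.length = k ∧ (∀ x ∈ l, x ∈ s) ∧ l.IsChain R := by
  induction k generalizing l with
  | zero => cases l <;> simp [chainsOf]
  | succ k ih =>
    cases l with
    | nil => simp [chainsOf]
    | cons a l =>
      simp only [chainsOf, mem_image, mem_filter, mem_product, Prod.exists, List.cons.injEq,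
        List.length_cons, List.mem_cons, forall_eq_or_imp, List.isChain_cons, ih]
      constructor
      · rintro ⟨a, l, ⟨⟨ha, hl, hls, hc⟩, hab⟩, rfl, rfl⟩
        exact ⟨by rw [hl], ⟨ha, hls⟩, hab, hc⟩
      · rintro ⟨hl, ⟨ha, hls⟩, hab, hc⟩
        exact ⟨a, l, ⟨⟨ha, by omega, hls, hc⟩, hab⟩, rfl, rfl⟩

theorem sum_chainsOf_succ {M : Type*} [AddCommMonoid M] (k : ℕ) (F : List α → M) :
    ∑ l ∈ chainsOf s R (k + 1), F l = ∑ l ∈ chainsOf s R k, ∑ a ∈ extensions s R l, F (a :: l) := by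
  rw [chainsOf, sum_image (by simp), sum_filter, sum_product_right]
  simp only [extensions, sum_filter]

theorem card_chainsOf_succ (k : ℕ) :
    #(chainsOf s R (k + 1)) = ∑ l ∈ chainsOf s R k, #(extensions s R l) := by
  simpa only [card_eq_sum_ones] using sum_chainsOf_succ (s := s) (R := R) k (fun _ => 1)

theorem pow_mul_sum_le_sum_extensions {w : α → ℝ} {c : ℝ} (hc : 0 ≤ c)
    (hw : ∀ b ∈ s, c * w b ≤ ∑ a ∈ s with R a b, w a) (k : ℕ) :
    c ^ k * ∑ a ∈ s, w a ≤ ∑ l ∈ chainsOf s R k, ∑ a ∈ extensions s R l, w a := by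
  induction k with
  | zero => simp [chainsOf, extensions]
  | succ k ih =>
    calc c ^ (k + 1) * ∑ a ∈ s, w a = c * (c ^ k * ∑ a ∈ s, w a) := by ring
      _ ≤ c * ∑ l ∈ chainsOf s R k, ∑ b ∈ extensions s R l, w b :=
        mul_le_mul_of_nonneg_left ih hc
      _ ≤ ∑ l ∈ chainsOf s R k, ∑ b ∈ extensions s R l, ∑ a ∈ s with R a b, w a := by
        rw [mul_sum]
        refine sum_le_sum fun l _ => ?_
        rw [mul_sum]
        exact sum_le_sum fun b hb => hw b (mem_filter.1 hb).1
      _ = ∑ l ∈ chainsOf s R (k + 1), ∑ a ∈ extensions s R l, w a := by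
        rw [sum_chainsOf_succ]
        simp [extensions]

theorem pow_mul_sum_le_card_chainsOf {w : α → ℝ} {c : ℝ} (hc : 0 ≤ c) (hw1 : ∀ a ∈ s, w a ≤ 1)
    (hw : ∀ b ∈ s, c * w b ≤ ∑ a ∈ s with R a b, w a) (k : ℕ) :
    c ^ k * ∑ a ∈ s, w a ≤ #(chainsOf s R (k + 1)) := by
  refine (pow_mul_sum_le_sum_extensions hc hw k).trans ?_
  rw [card_chainsOf_succ, Nat.cast_sum]
  refine sum_le_sum fun l _ => ?_
  simpa only [extensions, card_eq_sum_ones, Nat.cast_sum, Nat.cast_one] using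
    sum_le_sum fun a ha => hw1 a (mem_filter.1 ha).1

end Chains

def rows (m : ℕ) : Finset (List Bool) := chainsOf univ (fun _ _ => True) m

theorem mem_rows {m : ℕ} {r : List Bool} : r ∈ rows m ↔ r.length = m := by
  simpa [rows, mem_chainsOf] using fun _ => (List.pairwise_of_forall (fun _ _ => trivial)).isChain

theorem sum_rows_succ {M : Type*} [AddCommMonoid M] (m : ℕ) (F : List Bool → M) :
    ∑ r ∈ rows (m + 1), F r = ∑ r ∈ rows m, (F (true :: r) + F (false :: r)) := by
  simp [rows, sum_chainsOf_succ, extensions]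

noncomputable def changeWeight (a b : Bool) : ℝ := if a = b then 1 else 7 / 10

noncomputable def rowWeight : List Bool → ℝ
  | a :: b :: t => changeWeight a b * rowWeight (b :: t)
  | _ => 1

theorem changeWeight_nonneg (a b : Bool) : 0 ≤ changeWeight a b := by
  unfold changeWeight; split_ifs <;> norm_num

theorem changeWeight_le_one (a b : Bool) : changeWeight a b ≤ 1 := by
  unfold changeWeight; split_ifs <;> norm_num

theorem rowWeight_nonneg : ∀ r, 0 ≤ rowWeight r
  | a :: b :: t => mul_nonneg (changeWeight_nonneg a b) (rowWeight_nonneg (b :: t))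
  | [] | [_] => zero_le_one

theorem rowWeight_le_one : ∀ r, rowWeight r ≤ 1
  | a :: b :: _ => mul_le_one₀ (changeWeight_le_one a b) (rowWeight_nonneg _) (rowWeight_le_one _)
  | [] | [_] => le_rfl

theorem sum_rowWeight_rows (m : ℕ) : ∑ r ∈ rows (m + 1), rowWeight r = 2 * (17 / 10) ^ m := by
  induction m with
  | zero => norm_num [rows, chainsOf, rowWeight]
  | succ m ih =>
    have key : ∀ r ∈ rows (m + 1), rowWeight (true :: r) + rowWeight (false :: r)
        = 17 / 10 * rowWeight r := by
      intro r hr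
      obtain ⟨y, l, rfl⟩ := List.exists_cons_of_length_eq_add_one (mem_rows.1 hr)
      cases y <;> norm_num [rowWeight, changeWeight] <;> ring
    rw [sum_rows_succ, sum_congr rfl key, ← mul_sum, ih, pow_succ]
    ring

def IsCheckerboard (a b c d : Bool) : Prop := a = d ∧ b = c ∧ a ≠ b

instance (a b c d : Bool) : Decidable (IsCheckerboard a b c d) := by
  unfold IsCheckerboard; infer_instance

theorem IsCheckerboard.sides_ne {a b c d : Bool} (h : IsCheckerboard a b c d) :
    a ≠ b ∧ c ≠ d ∧ a ≠ c ∧ b ≠ d := by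
  obtain ⟨rfl, rfl, h⟩ := h
  exact ⟨h, h.symm, h, h.symm⟩

def rowsCompatible : List Bool → List Bool → Bool
  | a :: b :: s, c :: d :: r => !decide (IsCheckerboard a b c d) && rowsCompatible (b :: s) (d :: r)
  | _, _ => true

noncomputable def compatWeight (r : List Bool) (x : Bool) : ℝ :=
  ∑ l ∈ rows (r.length - 1), if rowsCompatible (x :: l) r then rowWeight (x :: l) else 0

theorem compatWeight_singleton (a x : Bool) : compatWeight [a] x = 1 := by
  simp [compatWeight, rows, chainsOf, rowsCompatible, rowWeight]

theorem compatWeight_cons_cons (a b x : Bool) (t : List Bool) :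
    compatWeight (a :: b :: t) x = ∑ y : Bool,
      if IsCheckerboard x y a b then 0 else changeWeight x y * compatWeight (b :: t) y := by
  have hF : ∀ y l, (if rowsCompatible (x :: y :: l) (a :: b :: t) then rowWeight (x :: y :: l)
      else 0) = if IsCheckerboard x y a b then 0 else changeWeight x y *
        (if rowsCompatible (y :: l) (b :: t) then rowWeight (y :: l) else 0) := by
    intro y l
    by_cases h : IsCheckerboard x y a b <;> simp [rowsCompatible, rowWeight, h]
  simp only [compatWeight, List.length_cons, Nat.add_sub_cancel, sum_rows_succ, hF,
    Fintype.sum_bool, sum_add_distrib]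
  congr 1 <;> split_ifs <;> simp [mul_sum]

/-- Normalised lower bound for `compatWeight r x` (see `le_compatWeight`); the constants are chosen
so that `profile_step` holds. -/
noncomputable def profile : List Bool → Bool → ℝ
  | a :: b :: _, x => if a = b then 1 / 2 else if x = a then 13 / 20 else 2 / 5
  | _, _ => 1

theorem profile_step (a b x : Bool) (t : List Bool) :
    17 / 10 * changeWeight a b * profile (a :: b :: t) x ≤ ∑ y : Bool,
      if IsCheckerboard x y a b then 0 else changeWeight x y * profile (b :: t) y := by
  rcases t with _ | ⟨c, t⟩ <;> cases a <;> cases b <;> try cases c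
  all_goals cases x <;> norm_num [profile, changeWeight, IsCheckerboard]

theorem one_le_profile_add (r : List Bool) : 1 ≤ profile r true + profile r false := by
  rcases r with _ | ⟨a, _ | ⟨b, t⟩⟩ <;> try (cases a <;> cases b)
  all_goals norm_num [profile]

theorem le_compatWeight (t : List Bool) (a x : Bool) :
    (17 / 10) ^ t.length * rowWeight (a :: t) * profile (a :: t) x ≤ compatWeight (a :: t) x := by
  induction t generalizing a x with
  | nil => simp [compatWeight_singleton, rowWeight, profile]
  | cons b t ih =>
    set K := (17 / 10 : ℝ) ^ t.length * rowWeight (b :: t)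
    have hK : 0 ≤ K := mul_nonneg (by positivity) (rowWeight_nonneg _)
    calc (17 / 10) ^ (b :: t).length * rowWeight (a :: b :: t) * profile (a :: b :: t) x
        = K * (17 / 10 * changeWeight a b * profile (a :: b :: t) x) := by
          simp only [K, rowWeight, List.length_cons]; ring
      _ ≤ K * ∑ y : Bool,
          if IsCheckerboard x y a b then 0 else changeWeight x y * profile (b :: t) y :=
        mul_le_mul_of_nonneg_left (profile_step a b x t) hK
      _ = ∑ y : Bool,
          if IsCheckerboard x y a b then 0 else changeWeight x y * (K * profile (b :: t) y) := by
        rw [mul_sum]; congr 1; ext y; split_ifs <;> ring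
      _ ≤ compatWeight (a :: b :: t) x := by
        rw [compatWeight_cons_cons]
        gcongr with y
        split_ifs
        · rfl
        · exact mul_le_mul_of_nonneg_left (ih b y) (changeWeight_nonneg x y)

theorem rowWeight_mul_le_sum_compatible {r : List Bool} (hr : r ≠ []) :
    (17 / 10) ^ (r.length - 1) * rowWeight r ≤
      ∑ s ∈ rows r.length with rowsCompatible s r, rowWeight s := by
  obtain ⟨a, t, rfl⟩ := List.exists_cons_of_ne_nil hr
  have hsplit : ∑ s ∈ rows (a :: t).length with rowsCompatible s (a :: t), rowWeight s
      = compatWeight (a :: t) true + compatWeight (a :: t) false := by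
    simp only [sum_filter, List.length_cons, sum_rows_succ, compatWeight, Nat.add_sub_cancel,
      sum_add_distrib]
  have hc : 0 ≤ (17 / 10 : ℝ) ^ t.length * rowWeight (a :: t) :=
    mul_nonneg (by positivity) (rowWeight_nonneg _)
  rw [hsplit, List.length_cons, Nat.add_sub_cancel]
  nlinarith [le_compatWeight t a true, le_compatWeight t a false, one_le_profile_add (a :: t)]

section Arrays

def checkerboardFreeArrays (m k : ℕ) : Finset (List (List Bool)) :=
  chainsOf (rows m) (fun s r => rowsCompatible s r) k

theorem two_mul_pow_le_card_checkerboardFreeArrays (m k : ℕ) :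
    2 * (17 / 10 : ℝ) ^ (m * (k + 1)) ≤ #(checkerboardFreeArrays (m + 1) (k + 1)) := by
  have hstep : ∀ r ∈ rows (m + 1), (17 / 10 : ℝ) ^ m * rowWeight r ≤
      ∑ s ∈ rows (m + 1) with rowsCompatible s r, rowWeight s := fun r hr => by
    have hlen := mem_rows.1 hr
    simpa only [hlen, Nat.add_sub_cancel] using
      rowWeight_mul_le_sum_compatible (r := r) (by rintro rfl; simp at hlen)
  have key := pow_mul_sum_le_card_chainsOf (R := fun s r => rowsCompatible s r = true)
    (by positivity) (fun r _ => rowWeight_le_one r) hstep k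
  rw [sum_rowWeight_rows] at key
  calc 2 * (17 / 10 : ℝ) ^ (m * (k + 1)) = ((17 / 10) ^ m) ^ k * (2 * (17 / 10) ^ m) := by
        rw [mul_add, mul_one, pow_add, pow_mul]; ring
    _ ≤ _ := key

theorem rowsCompatible_getD : ∀ {s r : List Bool}, rowsCompatible s r = true →
    s.length = r.length → ∀ j, ¬IsCheckerboard (s.getD j false) (s.getD (j + 1) false)
      (r.getD j false) (r.getD (j + 1) false)
  | [], [], _, _, _ => by simp [IsCheckerboard]
  | [_], [_], _, _, j => fun h => by cases j <;> simpa using h.sides_ne.2.2.2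
  | a :: b :: s, c :: d :: r, h, hl, j => by
    simp only [rowsCompatible, Bool.and_eq_true, Bool.not_eq_true', decide_eq_false_iff_not] at h
    cases j with
    | zero => exact h.1
    | succ j => simpa using rowsCompatible_getD h.2 (by simpa using hl) j
  | [], _ :: _, _, hl, _ | _ :: _, [], _, hl, _ | [_], _ :: _ :: _, _, hl, _
  | _ :: _ :: _, [_], _, hl, _ => by simp at hl

def faceColor (g : List (List Bool)) (z : ℤ × ℤ) : Bool :=
  if 0 ≤ z.1 ∧ 0 ≤ z.2 then (g.getD z.1.toNat []).getD z.2.toNat false else false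

theorem faceColor_natCast (g : List (List Bool)) (i j : ℕ) :
    faceColor g (i, j) = (g.getD i []).getD j false := by
  simp [faceColor]

def IsCheckerboardFree (φ : ℤ × ℤ → Bool) : Prop :=
  ∀ i j, ¬IsCheckerboard (φ (i, j)) (φ (i, j + 1)) (φ (i + 1, j)) (φ (i + 1, j + 1))

variable {m k : ℕ} {g : List (List Bool)}

theorem faceColor_isCheckerboardFree (hg : g ∈ checkerboardFreeArrays m k) :
    IsCheckerboardFree (faceColor g) := by
  obtain ⟨hlen, hrows, hchain⟩ := mem_chainsOf.1 hg
  intro i j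
  rcases lt_or_ge i 0 with hi | hi
  · simp [faceColor, IsCheckerboard, hi.not_ge]
  rcases lt_or_ge j 0 with hj | hj
  · simp [faceColor, IsCheckerboard, hj.not_ge]
  lift i to ℕ using hi
  lift j to ℕ using hj
  simp only [← Nat.cast_add_one, faceColor_natCast]
  by_cases hi : i + 1 < g.length
  · have hc := hchain.getElem i hi
    rw [List.getD_eq_getElem g [] (by omega : i < g.length), List.getD_eq_getElem g [] hi]
    exact rowsCompatible_getD hc (by rw [mem_rows.1 (hrows _ (List.getElem_mem _)),
      mem_rows.1 (hrows _ (List.getElem_mem _))]) j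
  · rw [List.getD_eq_default g [] (by omega : g.length ≤ i + 1)]
    exact fun h => by simpa using h.sides_ne.2.1

theorem faceColor_eq_true (hg : g ∈ checkerboardFreeArrays m k) {z : ℤ × ℤ}
    (hz : faceColor g z = true) :
    0 ≤ z.1 ∧ z.1 < k ∧ 0 ≤ z.2 ∧ z.2 < m := by
  obtain ⟨hlen, hrows, -⟩ := mem_chainsOf.1 hg
  obtain ⟨i, j⟩ := z
  rcases lt_or_ge i 0 with hi | hi
  · simp [faceColor, hi.not_ge] at hz
  rcases lt_or_ge j 0 with hj | hj
  · simp [faceColor, hj.not_ge] at hz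
  lift i to ℕ using hi
  lift j to ℕ using hj
  rw [faceColor_natCast] at hz
  by_cases hi : i < g.length
  · rw [List.getD_eq_getElem g [] hi] at hz
    have hrow := mem_rows.1 (hrows _ (List.getElem_mem hi))
    by_cases hj : j < g[i].length
    · simp only
      omega
    · rw [List.getD_eq_default g[i] false (by omega)] at hz
      simp at hz
  · rw [List.getD_eq_default g [] (by omega)] at hz
    simp at hz

theorem faceColor_injOn :
    Set.InjOn faceColor (checkerboardFreeArrays m k : Set (List (List Bool))) := by
  intro g hg g' hg' h
  obtain ⟨hlen, hrows, -⟩ := mem_chainsOf.1 (Finset.mem_coe.1 hg)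
  obtain ⟨hlen', hrows', -⟩ := mem_chainsOf.1 (Finset.mem_coe.1 hg')
  refine List.ext_getElem (hlen.trans hlen'.symm) fun i hi hi' => ?_
  refine List.ext_getElem ?_ fun j hj hj' => ?_
  · rw [mem_rows.1 (hrows _ (List.getElem_mem hi)), mem_rows.1 (hrows' _ (List.getElem_mem hi'))]
  · have := congrFun h (i, j)
    rwa [faceColor_natCast, faceColor_natCast, List.getD_eq_getElem _ _ hi,
      List.getD_eq_getElem _ _ hi', List.getD_eq_getElem _ _ hj,
      List.getD_eq_getElem _ _ hj'] at this

end Arrays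

section Boundary

variable {m n : ℕ}

def latticePoint (v : Fin m × Fin n) : ℤ × ℤ := ((v.1 : ℤ), (v.2 : ℤ))

theorem latticePoint_injective : Function.Injective (latticePoint (m := m) (n := n)) := by
  intro u v h
  simp only [latticePoint, Prod.mk.injEq, Nat.cast_inj, Fin.val_inj] at h
  exact Prod.ext h.1 h.2

theorem exists_latticePoint_eq {z : ℤ × ℤ} (h1 : 0 ≤ z.1) (h1' : z.1 < m) (h2 : 0 ≤ z.2)
    (h2' : z.2 < n) : ∃ v : Fin m × Fin n, latticePoint v = z :=
  ⟨(⟨z.1.toNat, by omega⟩, ⟨z.2.toNat, by omega⟩), by simp [latticePoint, h1, h2]⟩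

def latticeNeighbors (z : ℤ × ℤ) : Finset (ℤ × ℤ) :=
  {(z.1, z.2 + 1), (z.1, z.2 - 1), (z.1 + 1, z.2), (z.1 - 1, z.2)}

theorem gridGraph_adj_iff {u v : Fin m × Fin n} :
    (gridGraph m n).Adj u v ↔ latticePoint v ∈ latticeNeighbors (latticePoint u) := by
  obtain ⟨⟨a, ha⟩, ⟨b, hb⟩⟩ := u
  obtain ⟨⟨c, hc⟩, ⟨d, hd⟩⟩ := v
  simp only [gridGraph, gridAdj, latticePoint, latticeNeighbors, mem_insert, mem_singleton,
    Prod.mk.injEq, Fin.mk.injEq]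
  omega

/-- Face `(i, j)` is the unit square `[i, i + 1] × [j, j + 1]`; the lattice edge `u v` separates
faces of different colours. -/
def Separates (φ : ℤ × ℤ → Bool) (u v : ℤ × ℤ) : Prop :=
  if u.1 = v.1 then φ (u.1 - 1, min u.2 v.2) ≠ φ (u.1, min u.2 v.2)
  else φ (min u.1 v.1, min u.2 v.2 - 1) ≠ φ (min u.1 v.1, min u.2 v.2)

instance (φ : ℤ × ℤ → Bool) (u v : ℤ × ℤ) : Decidable (Separates φ u v) := by
  unfold Separates; infer_instance

theorem separates_comm (φ : ℤ × ℤ → Bool) (u v : ℤ × ℤ) : Separates φ u v ↔ Separates φ v u := by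
  unfold Separates
  by_cases h : u.1 = v.1
  · rw [if_pos h, if_pos h.symm, h, min_comm]
  · rw [if_neg h, if_neg (Ne.symm h), min_comm u.1, min_comm u.2]

def boundaryGraph (m n : ℕ) (φ : ℤ × ℤ → Bool) : SimpleGraph (Fin m × Fin n) where
  Adj u v := (gridGraph m n).Adj u v ∧ Separates φ (latticePoint u) (latticePoint v)
  symm := ⟨fun _ _ h => ⟨h.1.symm, (separates_comm φ _ _).1 h.2⟩⟩
  loopless := ⟨fun _ h => h.1.ne rfl⟩

instance (φ : ℤ × ℤ → Bool) : DecidableRel (boundaryGraph m n φ).Adj :=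
  fun u v => inferInstanceAs
    (Decidable ((gridGraph m n).Adj u v ∧ Separates φ (latticePoint u) (latticePoint v)))

def SupportedOnFaces (m n : ℕ) (φ : ℤ × ℤ → Bool) : Prop :=
  ∀ z, φ z = true → 0 ≤ z.1 ∧ z.1 + 1 < m ∧ 0 ≤ z.2 ∧ z.2 + 1 < n

variable {φ ψ : ℤ × ℤ → Bool}

theorem SupportedOnFaces.mem_box_of_separates (hφ : SupportedOnFaces m n φ) {u z : ℤ × ℤ}
    (hu : 0 ≤ u.1 ∧ u.1 < m ∧ 0 ≤ u.2 ∧ u.2 < n) (hz : z ∈ latticeNeighbors u)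
    (hs : Separates φ u z) : 0 ≤ z.1 ∧ z.1 < m ∧ 0 ≤ z.2 ∧ z.2 < n := by
  have face : ∀ a b : ℤ × ℤ, φ a ≠ φ b → φ a = true ∨ φ b = true := by
    intro a b; cases φ a <;> cases φ b <;> simp
  obtain ⟨p, q⟩ := u
  simp only [latticeNeighbors, mem_insert, mem_singleton] at hz
  rcases hz with rfl | rfl | rfl | rfl <;> simp only [Separates] at hs <;> split_ifs at hs <;>
    rcases face _ _ hs with h | h <;> have := hφ _ h <;> simp only at this ⊢ <;> omega

theorem card_filter_separates_latticeNeighbors (φ : ℤ × ℤ → Bool) (p q : ℤ) :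
    #((latticeNeighbors (p, q)).filter (Separates φ (p, q))) =
      (if φ (p - 1, q - 1) ≠ φ (p - 1, q) then 1 else 0) +
      (if φ (p, q - 1) ≠ φ (p, q) then 1 else 0) +
      (if φ (p - 1, q - 1) ≠ φ (p, q - 1) then 1 else 0) +
      (if φ (p - 1, q) ≠ φ (p, q) then 1 else 0) := by
  have hp : p ≠ p + 1 ∧ p ≠ p - 1 := by omega
  rw [card_filter, latticeNeighbors, sum_insert (by simp; omega), sum_insert (by simp),
    sum_insert (by simp; omega), sum_singleton]
  simp only [Separates, ↓reduceIte, le_add_iff_nonneg_right, zero_le_one, inf_of_le_left, ne_eq,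
    ite_not, tsub_le_iff_right, inf_of_le_right, hp, min_self]
  omega

theorem sides_count_eq_zero_or_two {a b c d : Bool} (h : ¬IsCheckerboard a b c d) :
    (if a ≠ b then 1 else 0) + (if c ≠ d then 1 else 0) + (if a ≠ c then 1 else 0) +
      (if b ≠ d then 1 else 0) = 0 ∨
    (if a ≠ b then 1 else 0) + (if c ≠ d then 1 else 0) + (if a ≠ c then 1 else 0) +
      (if b ≠ d then 1 else 0) = 2 := by
  revert h; cases a <;> cases b <;> cases c <;> cases d <;> decide

theorem SupportedOnFaces.eq_false (hφ : SupportedOnFaces m n φ) {z : ℤ × ℤ}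
    (hz : ¬(0 ≤ z.1 ∧ z.1 + 1 < m ∧ 0 ≤ z.2 ∧ z.2 + 1 < n)) : φ z = false :=
  Bool.eq_false_iff.2 fun h => hz (hφ z h)

theorem degree_boundaryGraph (hφ : SupportedOnFaces m n φ) (v : Fin m × Fin n) :
    (boundaryGraph m n φ).degree v =
      #((latticeNeighbors (latticePoint v)).filter (Separates φ (latticePoint v))) := by
  rw [← SimpleGraph.card_neighborFinset_eq_degree, SimpleGraph.neighborFinset_eq_filter,
    ← card_image_of_injective _ latticePoint_injective]
  congr 1
  ext z
  simp only [mem_image, mem_filter, mem_univ, true_and]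
  constructor
  · rintro ⟨w, ⟨hadj, hs⟩, rfl⟩
    exact ⟨gridGraph_adj_iff.1 hadj, hs⟩
  · rintro ⟨hz, hs⟩
    have hv : 0 ≤ (latticePoint v).1 ∧ (latticePoint v).1 < m ∧ 0 ≤ (latticePoint v).2 ∧
        (latticePoint v).2 < n := by
      simp [latticePoint]
    obtain ⟨h1, h2, h3, h4⟩ := hφ.mem_box_of_separates hv hz hs
    obtain ⟨w, rfl⟩ := exists_latticePoint_eq h1 h2 h3 h4
    exact ⟨w, ⟨gridGraph_adj_iff.2 hz, hs⟩, rfl⟩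

theorem degree_boundaryGraph_eq_zero_or_two (hφ : SupportedOnFaces m n φ)
    (hfree : IsCheckerboardFree φ) (v : Fin m × Fin n) :
    (boundaryGraph m n φ).degree v = 0 ∨ (boundaryGraph m n φ).degree v = 2 := by
  rw [degree_boundaryGraph hφ, latticePoint, card_filter_separates_latticeNeighbors]
  have h := hfree ((v.1 : ℤ) - 1) ((v.2 : ℤ) - 1)
  simp only [sub_add_cancel] at h
  exact sides_count_eq_zero_or_two h

theorem edgeFinset_boundaryGraph_mem_msapFinset (hφ : SupportedOnFaces m n φ)
    (hfree : IsCheckerboardFree φ) (hne : (boundaryGraph m n φ).edgeFinset ≠ ∅) :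
    (boundaryGraph m n φ).edgeFinset ∈ msapFinset m n := by
  refine mem_filter.2 ⟨mem_powerset.2 (SimpleGraph.edgeFinset_subset_edgeFinset.2 fun _ _ h => h.1),
    hne, fun v => ?_⟩
  rw [← SimpleGraph.incidenceFinset_eq_filter, SimpleGraph.card_incidenceFinset_eq_degree]
  exact degree_boundaryGraph_eq_zero_or_two hφ hfree v

theorem separates_iff_of_boundaryGraph_eq (h : boundaryGraph m n φ = boundaryGraph m n ψ)
    {u v : Fin m × Fin n} (hadj : (gridGraph m n).Adj u v) :
    Separates φ (latticePoint u) (latticePoint v) ↔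
      Separates ψ (latticePoint u) (latticePoint v) := by
  have := congrArg (fun G : SimpleGraph _ => G.Adj u v) h
  simpa only [boundaryGraph, hadj, true_and] using Iff.of_eq this

/-- Row `i` of the colouring is row `i - 1` flipped along the boundary edges between them, and row
`-1` vanishes. -/
theorem eq_of_boundaryGraph_eq (hφ : SupportedOnFaces m n φ) (hψ : SupportedOnFaces m n ψ)
    (h : boundaryGraph m n φ = boundaryGraph m n ψ) : φ = ψ := by
  have hrow : ∀ k : ℕ, ∀ j, φ ((k : ℤ) - 1, j) = ψ ((k : ℤ) - 1, j) := by
    intro k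
    induction k with
    | zero => intro j; rw [hφ.eq_false (by simp), hψ.eq_false (by simp)]
    | succ k ih =>
      intro j
      rw [Nat.cast_add_one, add_sub_cancel_right]
      by_cases hin : 0 ≤ (k : ℤ) ∧ (k : ℤ) + 1 < m ∧ 0 ≤ j ∧ j + 1 < n
      · obtain ⟨u, hu⟩ := exists_latticePoint_eq (m := m) (n := n) (z := ((k : ℤ), j))
          (by simp) (by simp; omega) hin.2.2.1 (by simp; omega)
        obtain ⟨v, hv⟩ := exists_latticePoint_eq (m := m) (n := n) (z := ((k : ℤ), j + 1))
          (by simp) (by simp; omega) (by simp; omega) (by simp; omega)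
        have hs := separates_iff_of_boundaryGraph_eq h (u := u) (v := v)
          (gridGraph_adj_iff.2 (by simp [hu, hv, latticeNeighbors]))
        simp only [hu, hv, Separates, if_true, min_eq_left (le_add_of_nonneg_right zero_le_one),
          ih j] at hs
        revert hs
        cases ψ ((k : ℤ) - 1, j) <;> cases φ ((k : ℤ), j) <;> cases ψ ((k : ℤ), j) <;> simp
      · rw [hφ.eq_false hin, hψ.eq_false hin]
  funext ⟨i, j⟩
  rcases lt_or_ge i 0 with hi | hi
  · rw [hφ.eq_false (by simp; omega), hψ.eq_false (by simp; omega)]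
  · lift i to ℕ using hi
    simpa using hrow (i + 1) j

end Boundary

theorem card_checkerboardFreeArrays_le (c r : ℕ) :
    #(checkerboardFreeArrays c r) ≤ msapCount (r + 1) (c + 1) + 1 := by
  set Φ := fun g => (boundaryGraph (r + 1) (c + 1) (faceColor g)).edgeFinset
  have hsupp : ∀ g ∈ checkerboardFreeArrays c r, SupportedOnFaces (r + 1) (c + 1) (faceColor g) :=
    fun g hg z hz => by have := faceColor_eq_true hg hz; omega
  have hmaps : ∀ g ∈ checkerboardFreeArrays c r, Φ g ∈ insert ∅ (msapFinset (r + 1) (c + 1)) := by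
    intro g hg
    by_cases hne : Φ g = ∅
    · exact hne ▸ mem_insert_self _ _
    · exact mem_insert_of_mem (edgeFinset_boundaryGraph_mem_msapFinset (hsupp g hg)
        (faceColor_isCheckerboardFree hg) hne)
  have hinj : Set.InjOn Φ (checkerboardFreeArrays c r) := fun g hg g' hg' h =>
    faceColor_injOn hg hg' (eq_of_boundaryGraph_eq (hsupp g hg) (hsupp g' hg')
      (SimpleGraph.edgeFinset_inj.1 h))
  calc #(checkerboardFreeArrays c r) ≤ #(insert ∅ (msapFinset (r + 1) (c + 1))) :=
        card_le_card_of_injOn Φ hmaps hinj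
    _ ≤ msapCount (r + 1) (c + 1) + 1 := card_insert_le _ _

theorem pow_le_msapCount (k : ℕ) : (17 / 10 : ℝ) ^ (k ^ 2) ≤ msapCount (k + 2) (k + 2) := by
  have harrays := two_mul_pow_le_card_checkerboardFreeArrays k k
  have hcount :
      (#(checkerboardFreeArrays (k + 1) (k + 1)) : ℝ) ≤ msapCount (k + 2) (k + 2) + 1 := by
    exact_mod_cast card_checkerboardFreeArrays_le (k + 1) (k + 1)
  have hexp : (17 / 10 : ℝ) ^ (k ^ 2) ≤ (17 / 10) ^ (k * (k + 1)) :=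
    pow_le_pow_right₀ (by norm_num) (by nlinarith)
  have hone : 1 ≤ (17 / 10 : ℝ) ^ (k ^ 2) := one_le_pow₀ (by norm_num)
  linarith

theorem degree_gridGraph_le_four {m n : ℕ} (v : Fin m × Fin n) : (gridGraph m n).degree v ≤ 4 := by
  rw [← SimpleGraph.card_neighborFinset_eq_degree,
    ← card_image_of_injective _ latticePoint_injective]
  refine (card_le_card (t := latticeNeighbors (latticePoint v)) fun z hz => ?_).trans
    (by exact card_le_four)
  obtain ⟨w, hw, rfl⟩ := mem_image.1 hz
  exact gridGraph_adj_iff.1 ((SimpleGraph.mem_neighborFinset _ _ _).1 hw)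

theorem msapCount_le (m n : ℕ) : msapCount m n ≤ 4 ^ (m * n) := by
  have hedges : 2 * #(gridGraph m n).edgeFinset ≤ 2 * (2 * (m * n)) := by
    rw [← SimpleGraph.sum_degrees_eq_twice_card_edges]
    calc ∑ v, (gridGraph m n).degree v ≤ ∑ _v : Fin m × Fin n, 4 :=
          sum_le_sum fun v _ => degree_gridGraph_le_four v
      _ = 2 * (2 * (m * n)) := by
        simp only [sum_const, card_univ, Fintype.card_prod, Fintype.card_fin, smul_eq_mul]; ring
  calc msapCount m n ≤ #(gridGraph m n).edgeFinset.powerset := card_le_card (filter_subset _ _)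
    _ = 2 ^ #(gridGraph m n).edgeFinset := card_powerset _
    _ ≤ 2 ^ (2 * (m * n)) := Nat.pow_le_pow_right (by norm_num) (by omega)
    _ = 4 ^ (m * n) := by rw [pow_mul]; norm_num

end MSAP

open Filter Topology

theorem tendsto_natCast_sub_two_sq_div_sq :
    Tendsto (fun n : ℕ => (((n - 2) ^ 2 : ℕ) : ℝ) / (n : ℝ) ^ 2) atTop (𝓝 1) := by
  have h : Tendsto (fun n : ℕ => (1 - 2 / (n : ℝ)) ^ 2) atTop (𝓝 1) := by
    simpa using ((tendsto_const_div_atTop_nhds_zero_nat (2 : ℝ)).const_sub 1).pow 2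
  refine h.congr' ((eventually_ge_atTop 2).mono fun n hn => ?_)
  have : (n : ℝ) ≠ 0 := by positivity
  show _ = (((n - 2) ^ 2 : ℕ) : ℝ) / (n : ℝ) ^ 2
  rw [Nat.cast_pow, Nat.cast_sub hn]
  field_simp
  push_cast
  ring

theorem le_liminf_rpow_one_div_sq {u : ℕ → ℝ} {a C : ℝ} (ha : 0 < a) (hC : 0 ≤ C)
    (hlow : ∀ᶠ n in atTop, a ^ ((n - 2) ^ 2) ≤ u n) (hup : ∀ᶠ n in atTop, u n ≤ C ^ (n ^ 2)) :
    a ≤ liminf (fun n : ℕ => u n ^ ((1 : ℝ) / (n : ℝ) ^ 2)) atTop := by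
  set l := fun n : ℕ => a ^ ((((n - 2) ^ 2 : ℕ) : ℝ) / (n : ℝ) ^ 2)
  have hl : Tendsto l atTop (𝓝 a) := by
    have := tendsto_const_nhds.rpow tendsto_natCast_sub_two_sq_div_sq (Or.inl ha.ne')
    rwa [Real.rpow_one] at this
  have hle : ∀ᶠ n in atTop, l n ≤ u n ^ ((1 : ℝ) / (n : ℝ) ^ 2) := hlow.mono fun n h => by
    calc l n = (a ^ ((n - 2) ^ 2)) ^ ((1 : ℝ) / (n : ℝ) ^ 2) := by
          rw [← Real.rpow_natCast, ← Real.rpow_mul ha.le, mul_one_div]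
      _ ≤ _ := Real.rpow_le_rpow (by positivity) h (by positivity)
  have hub : ∀ᶠ n in atTop, u n ^ ((1 : ℝ) / (n : ℝ) ^ 2) ≤ C :=
    (hlow.and (hup.and (eventually_ge_atTop 1))).mono fun n ⟨hn_low, hn_up, hn⟩ => by
      calc u n ^ ((1 : ℝ) / (n : ℝ) ^ 2) ≤ (C ^ (n ^ 2)) ^ (((n ^ 2 : ℕ) : ℝ)⁻¹) := by
            rw [Nat.cast_pow, one_div]
            exact Real.rpow_le_rpow ((pow_nonneg ha.le _).trans hn_low) hn_up (by positivity)
        _ = C := Real.pow_rpow_inv_natCast hC (by positivity)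
  calc a = liminf l atTop := hl.liminf_eq.symm
    _ ≤ _ := liminf_le_liminf hle hl.isBoundedUnder_ge
      (isBoundedUnder_of_eventually_le hub).isCoboundedUnder_ge

open Filter in
/-- p_{n×n} ≥ (17/10)^((n-2)²) for n ≥ 3, hence the liminf of (p_{n×n})^(1/n²)
is at least 17/10, which exceeds 1. -/
theorem msap_liminf_lower :
    (∀ n : ℕ, 3 ≤ n → ((17 : ℝ) / 10) ^ ((n - 2) ^ 2) ≤ (msapCount n n : ℝ)) ∧
    (17 : ℝ) / 10 ≤
      Filter.liminf (fun n : ℕ => (msapCount n n : ℝ) ^ ((1 : ℝ) / (n : ℝ) ^ 2)) atTop ∧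
    (1 : ℝ) < (17 : ℝ) / 10 := by
  have hlow : ∀ n : ℕ, 3 ≤ n → ((17 : ℝ) / 10) ^ ((n - 2) ^ 2) ≤ (msapCount n n : ℝ) := by
    intro n hn
    obtain ⟨k, rfl⟩ := Nat.exists_eq_add_of_le' (by omega : 2 ≤ n)
    simpa using MSAP.pow_le_msapCount k
  refine ⟨hlow, le_liminf_rpow_one_div_sq (C := 4) (by norm_num) (by norm_num)
    ((eventually_ge_atTop 3).mono hlow) (Eventually.of_forall fun n => ?_), by norm_num⟩
  exact_mod_cast (MSAP.msapCount_le n n).trans_eq (by rw [sq])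
end
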